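/- The number of k-omni binary strings of length n (n ≥ 2k) is N(n,k,2) = sum_{t=2k}^{n} C(t-k-1, k-1) 2^{n+k-t}, and consequently the probability that a uniformly random binary string of length n is k-omni is P(n,k,2) = 2^{-k} sum_{t=0}^{n-2k} C(t+k-1, k-1) 2^{-t}. -/

import Mathlib

open Finset
open scoped Classical

/-!
Parse a binary word greedily into blocks `a⋯a b` with `b ≠ a`; the number `omniIndex s` of complete
blocks is the largest `k` for which `s` is `k`-omni: any word of length `omniIndex s` embeds one
letter per block, while a word that always asks for the letter opposite to the one the current
block starts with does not embed once it is one letter longer. Counting words by their first two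
letters gives `N(k + 1, n + 2) = N(k + 1, n + 1) + 2 N(k, n)` with `N(0, n) = 2ⁿ` and `N(k, n) = 0`
for `n < 2k`, and Pascal's rule shows that the closed form satisfies the same recurrence.
-/

def omniIndex : List (Fin 2) → ℕ
  | [] => 0
  | [_] => 0
  | a :: b :: s => if a = b then omniIndex (a :: s) else omniIndex s + 1
termination_by l => l.length

theorem omniIndex_nil : omniIndex [] = 0 := by rw [omniIndex]

theorem omniIndex_singleton (a : Fin 2) : omniIndex [a] = 0 := by rw [omniIndex]

theorem omniIndex_cons_cons (a b : Fin 2) (s : List (Fin 2)) :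
    omniIndex (a :: b :: s) = if a = b then omniIndex (a :: s) else omniIndex s + 1 := by
  rw [omniIndex]

theorem Fin.two_eq_or_eq_of_ne {a b : Fin 2} (hab : a ≠ b) (c : Fin 2) : c = a ∨ c = b := by
  fin_cases a <;> fin_cases b <;> fin_cases c <;> simp_all

theorem Fin.two_add_one_ne (a : Fin 2) : a + 1 ≠ a := by fin_cases a <;> decide

theorem Fin.two_eq_add_one_of_ne {a b : Fin 2} (hab : a ≠ b) : b = a + 1 :=
  ((Fin.two_eq_or_eq_of_ne (Fin.two_add_one_ne a) b).resolve_right hab.symm)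

theorem sublist_of_length_le_omniIndex {s T : List (Fin 2)} (hT : T.length ≤ omniIndex s) :
    T.Sublist s := by
  induction s using omniIndex.induct generalizing T with
  | case1 => simp_all [omniIndex_nil]
  | case2 a => simp_all [omniIndex_singleton]
  | case3 b s ih =>
    rw [omniIndex_cons_cons, if_pos rfl] at hT
    exact (ih hT).trans ((List.sublist_cons_self b s).cons_cons b)
  | case4 a b s hab ih =>
    rw [omniIndex_cons_cons, if_neg hab] at hT
    cases T with
    | nil => simp
    | cons c T =>
      have hc : [c].Sublist [a, b] := by
        rcases Fin.two_eq_or_eq_of_ne hab c with rfl | rfl <;> simp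
      simpa using hc.append (ih (T := T) (by simpa using hT))

theorem exists_length_eq_omniIndex_succ_not_sublist (s : List (Fin 2)) :
    ∃ T : List (Fin 2), T.length = omniIndex s + 1 ∧ ¬ T.Sublist s ∧
      ∀ a ∈ s.head?, T.head? = some (a + 1) := by
  induction s using omniIndex.induct with
  | case1 => exact ⟨[0], by simp [omniIndex_nil], by simp, by simp⟩
  | case2 a =>
    exact ⟨[a + 1], by simp [omniIndex_singleton], by simp, by simp⟩
  | case3 b s ih =>
    obtain ⟨T, hlen, hns, hhead⟩ := ih
    refine ⟨T, by rw [omniIndex_cons_cons, if_pos rfl, hlen], ?_, by simpa using hhead⟩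
    obtain ⟨T', rfl⟩ : ∃ T', T = (b + 1) :: T' := by
      cases T with
      | nil => simp at hhead
      | cons c T' => exact ⟨T', by simpa using hhead b⟩
    exact fun hsub => hns (List.Sublist.of_cons_of_ne (Fin.two_add_one_ne b) hsub)
  | case4 a b s hab ih =>
    obtain ⟨T, hlen, hns, -⟩ := ih
    refine ⟨b :: T, by rw [omniIndex_cons_cons, if_neg hab, List.length_cons, hlen], ?_,
      by simp [Fin.two_eq_add_one_of_ne hab]⟩
    exact fun hsub =>
      hns (List.cons_sublist_cons.mp (List.Sublist.of_cons_of_ne (Ne.symm hab) hsub))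

theorem forall_sublist_iff_le_omniIndex (k : ℕ) (s : List (Fin 2)) :
    (∀ T : List (Fin 2), T.length = k → T.Sublist s) ↔ k ≤ omniIndex s := by
  refine ⟨fun h => ?_, fun h T hT => sublist_of_length_le_omniIndex (hT ▸ h)⟩
  by_contra! hlt
  obtain ⟨T, hlen, hns, -⟩ := exists_length_eq_omniIndex_succ_not_sublist s
  exact hns ((List.sublist_append_left T _).trans
    (h (T ++ List.replicate (k - T.length) 0) (by simp; omega)))

theorem two_mul_omniIndex_le_length (s : List (Fin 2)) : 2 * omniIndex s ≤ s.length := by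
  induction s using omniIndex.induct with
  | case1 => simp [omniIndex_nil]
  | case2 a => simp [omniIndex_singleton]
  | case3 b s ih => rw [omniIndex_cons_cons, if_pos rfl]; simp at ih ⊢; omega
  | case4 a b s hab ih => rw [omniIndex_cons_cons, if_neg hab]; simp at ih ⊢; omega

theorem card_filter_ofFn_succ {α : Type*} [Fintype α] (n : ℕ) (P : List α → Prop)
    [DecidablePred P] :
    #{f : Fin (n + 1) → α | P (List.ofFn f)} = ∑ b, #{g : Fin n → α | P (b :: List.ofFn g)} := by
  rw [← Fintype.card_subtype]
  have e : {f : Fin (n + 1) → α // P (List.ofFn f)}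
      ≃ {p : α × (Fin n → α) // P (p.1 :: List.ofFn p.2)} :=
    ((Fin.consEquiv fun _ => α).subtypeEquiv fun p => by simp [Fin.consEquiv]).symm
  rw [Fintype.card_congr (e.trans
    (Equiv.subtypeProdEquivSigmaSubtype fun a g => P (a :: List.ofFn g)))]
  simp [Fintype.card_subtype]

noncomputable def omniCount (k n : ℕ) : ℕ := #{f : Fin n → Fin 2 | k ≤ omniIndex (List.ofFn f)}

noncomputable def omniCountCons (a : Fin 2) (k n : ℕ) : ℕ :=
  #{f : Fin n → Fin 2 | k ≤ omniIndex (a :: List.ofFn f)}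

theorem omniCount_zero_left (n : ℕ) : omniCount 0 n = 2 ^ n := by simp [omniCount]

theorem omniCount_eq_zero_of_lt {k n : ℕ} (h : n < 2 * k) : omniCount k n = 0 := by
  refine card_eq_zero.mpr (filter_eq_empty_iff.mpr fun f _ => ?_)
  have := two_mul_omniIndex_le_length (List.ofFn f)
  simp only [List.length_ofFn] at this
  omega

theorem omniCount_succ (k n : ℕ) : omniCount k (n + 1) = ∑ a, omniCountCons a k n :=
  card_filter_ofFn_succ n (k ≤ omniIndex ·)

theorem Fin.sum_univ_two_eq_add_add_one {M : Type*} [AddCommMonoid M] (f : Fin 2 → M)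
    (a : Fin 2) : ∑ b, f b = f a + f (a + 1) :=
  Fintype.sum_eq_add a (a + 1) (Fin.two_add_one_ne a).symm fun c hc =>
    absurd (Fin.two_eq_or_eq_of_ne (Fin.two_add_one_ne a).symm c) (by tauto)

theorem omniCountCons_succ_left_succ (a : Fin 2) (k n : ℕ) :
    omniCountCons a (k + 1) (n + 1) = omniCountCons a (k + 1) n + omniCount k n := by
  rw [omniCountCons, card_filter_ofFn_succ n fun l => k + 1 ≤ omniIndex (a :: l),
    Fin.sum_univ_two_eq_add_add_one _ a]
  simp only [omniIndex_cons_cons, if_pos, if_neg (Fin.two_add_one_ne a).symm,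
    add_le_add_iff_right]
  rfl

theorem omniCount_succ_left_add_two (k n : ℕ) :
    omniCount (k + 1) (n + 2) = omniCount (k + 1) (n + 1) + 2 * omniCount k n := by
  simp only [omniCount_succ _ (n + 1), omniCountCons_succ_left_succ, sum_add_distrib,
    ← omniCount_succ, sum_const, card_univ, Fintype.card_fin, smul_eq_mul]

/-- The closed form `N(k, n)` for `k = j + 1` and `n = 2k + m`, reindexed so that no truncated
subtraction occurs. -/
def omniSum (j m : ℕ) : ℕ := ∑ p ∈ antidiagonal m, (j + p.1).choose j * 2 ^ (j + 1 + p.2)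

theorem omniSum_zero_right (j : ℕ) : omniSum j 0 = 2 ^ (j + 1) := by simp [omniSum]

theorem omniSum_zero_succ (m : ℕ) : omniSum 0 (m + 1) = omniSum 0 m + 2 * 2 ^ (m + 1) := by
  simp only [omniSum, Nat.sum_antidiagonal_succ, Nat.choose_zero_right]
  ring

theorem omniSum_succ_succ (j m : ℕ) :
    omniSum (j + 1) (m + 1) = omniSum (j + 1) m + 2 * omniSum j (m + 1) := by
  have pascal : ∀ p : ℕ × ℕ, (j + 1 + p.1).choose (j + 1) * 2 ^ (j + 1 + 1 + p.2)
      = (j + p.1).choose (j + 1) * 2 ^ (j + 2 + p.2)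
        + 2 * ((j + p.1).choose j * 2 ^ (j + 1 + p.2)) := fun p => by
    rw [show j + 1 + p.1 = j + p.1 + 1 by ring, Nat.choose_succ_succ']
    ring
  have shift : ∑ p ∈ antidiagonal (m + 1), (j + p.1).choose (j + 1) * 2 ^ (j + 2 + p.2)
      = omniSum (j + 1) m := by
    rw [Nat.sum_antidiagonal_succ, Nat.choose_eq_zero_of_lt (by omega), zero_mul, zero_add]
    exact sum_congr rfl fun p _ => by ring_nf
  rw [omniSum, sum_congr rfl fun p _ => pascal p, sum_add_distrib, shift, ← mul_sum]
  rfl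

theorem omniCount_succ_two_mul_add (j m : ℕ) :
    omniCount (j + 1) (2 * (j + 1) + m) = omniSum j m := by
  induction j generalizing m with
  | zero =>
    induction m with
    | zero =>
      rw [omniSum_zero_right, show 2 * (0 + 1) + 0 = 0 + 2 by rfl, omniCount_succ_left_add_two,
        omniCount_eq_zero_of_lt (by omega), omniCount_zero_left]
      rfl
    | succ m ih =>
      rw [omniSum_zero_succ, ← ih, ← omniCount_zero_left,
        show 2 * (0 + 1) + (m + 1) = m + 1 + 2 by ring, omniCount_succ_left_add_two]
      ring_nf
  | succ j ihj =>
    induction m with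
    | zero =>
      rw [omniSum_zero_right, show 2 * (j + 1 + 1) + 0 = 2 * (j + 1) + 2 by ring,
        omniCount_succ_left_add_two, omniCount_eq_zero_of_lt (by omega), ← add_zero (2 * (j + 1)),
        ihj, omniSum_zero_right]
      ring
    | succ m ih =>
      rw [omniSum_succ_succ, ← ih, ← ihj,
        show 2 * (j + 1 + 1) + (m + 1) = 2 * (j + 1) + (m + 1) + 2 by ring,
        omniCount_succ_left_add_two]
      ring_nf

theorem omniSum_eq_sum_Icc (j m : ℕ) :
    omniSum j m = ∑ t ∈ Icc (2 * (j + 1)) (2 * (j + 1) + m),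
      (t - (j + 1) - 1).choose (j + 1 - 1) * 2 ^ (2 * (j + 1) + m + (j + 1) - t) := by
  rw [omniSum, Nat.sum_antidiagonal_eq_sum_range_succ_mk, ← Ico_add_one_right_eq_Icc,
    sum_Ico_eq_sum_range, show 2 * (j + 1) + m + 1 - 2 * (j + 1) = m + 1 by omega]
  refine sum_congr rfl fun i hi => ?_
  rw [mem_range] at hi
  rw [show 2 * (j + 1) + i - (j + 1) - 1 = j + i by omega, Nat.add_sub_cancel,
    show 2 * (j + 1) + m + (j + 1) - (2 * (j + 1) + i) = j + 1 + (m - i) by omega]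

theorem omniSum_div_two_pow (j m : ℕ) :
    (omniSum j m : ℝ) / 2 ^ (2 * (j + 1) + m) = (2 : ℝ)⁻¹ ^ (j + 1) *
      ∑ t ∈ range (m + 1), ((t + (j + 1) - 1).choose (j + 1 - 1) : ℝ) * (2 : ℝ)⁻¹ ^ t := by
  rw [omniSum, Nat.sum_antidiagonal_eq_sum_range_succ_mk, Nat.cast_sum, sum_div, mul_sum]
  refine sum_congr rfl fun i hi => ?_
  rw [mem_range] at hi
  obtain ⟨l, rfl⟩ := Nat.exists_eq_add_of_le (Nat.lt_succ_iff.mp hi)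
  rw [show i + (j + 1) - 1 = j + i by omega, Nat.add_sub_cancel, Nat.add_sub_cancel_left,
    inv_pow, inv_pow]
  push_cast
  field_simp
  ring

/-- The number of `k`-omni binary strings of length `n ≥ 2k` is
`N(n,k,2) = ∑_{t=2k}^{n} C(t-k-1,k-1) 2^{n+k-t}`, and consequently the probability that a
uniformly random binary string of length `n` is `k`-omni is
`P(n,k,2) = 2^{-k} ∑_{t=0}^{n-2k} C(t+k-1,k-1) 2^{-t}`. -/
theorem stmt_6 (n k : ℕ) (hk : 1 ≤ k) (hn : 2 * k ≤ n) :
    (Finset.univ.filter (fun S : Fin n → Fin 2 =>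
        ∀ T : List (Fin 2), T.length = k → T.Sublist (List.ofFn S))).card
      = ∑ t ∈ Finset.Icc (2 * k) n, (t - k - 1).choose (k - 1) * 2 ^ (n + k - t) ∧
    ((Finset.univ.filter (fun S : Fin n → Fin 2 =>
        ∀ T : List (Fin 2), T.length = k → T.Sublist (List.ofFn S))).card : ℝ) / 2 ^ n
      = (2 : ℝ)⁻¹ ^ k *
          ∑ t ∈ Finset.range (n - 2 * k + 1),
            ((t + k - 1).choose (k - 1) : ℝ) * (2 : ℝ)⁻¹ ^ t := by
  obtain ⟨j, rfl⟩ := Nat.exists_eq_add_of_le' hk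
  obtain ⟨m, rfl⟩ := Nat.exists_eq_add_of_le hn
  have hcount : #{S : Fin (2 * (j + 1) + m) → Fin 2 |
      ∀ T : List (Fin 2), T.length = j + 1 → T.Sublist (List.ofFn S)} = omniSum j m := by
    simp only [forall_sublist_iff_le_omniIndex]
    exact omniCount_succ_two_mul_add j m
  rw [hcount, Nat.add_sub_cancel_left]
  exact ⟨omniSum_eq_sum_Icc j m, omniSum_div_two_pow j m⟩
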